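/- Let g be a 3-Lie algebra and N a Nijenhuis operator. Then for all k, r ≥ 1, [x₁,x₂,x₃]_{N^{k+r}} = ([x₁,x₂,x₃]_{N^k})_{N^r}, where subscripting a bracket by a linear map M denotes μ_M(x₁,x₂,x₃) = μ(Mx₁,x₂,x₃)+μ(x₁,Mx₂,x₃)+μ(x₁,x₂,Mx₃)−Mμ(x₁,x₂,x₃). -/
import Mathlib


/-- Deformation of a trilinear bracket `μ` by a linear operator `M`:
`μ_M(x₁,x₂,x₃) = μ(Mx₁,x₂,x₃) + μ(x₁,Mx₂,x₃) + μ(x₁,x₂,Mx₃) − M μ(x₁,x₂,x₃)`. -/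
def deform {K : Type*} [Field K] {g : Type*} [AddCommGroup g] [Module K g]
    (M : Module.End K g) (μ : g → g → g → g) : g → g → g → g :=
  fun x y z => μ (M x) y z + μ x (M y) z + μ x y (M z) - M (μ x y z)

/-- `N` is a Nijenhuis operator for the 3-Lie bracket `b`: conditions (17) and (15). -/
def IsNijenhuis {K : Type*} [Field K] {g : Type*} [AddCommGroup g] [Module K g]
    (b : g →ₗ[K] g →ₗ[K] g →ₗ[K] g) (N : Module.End K g) : Prop :=
  (∀ x y z, N (deform N (fun u v w => b u v w) x y z)
      = b (N x) (N y) z + b (N x) y (N z) + b x (N y) (N z))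
  ∧ (∀ x y z, b (N x) (N y) (N z) = 0)

section Aux
variable {K : Type*} [Field K] {g : Type*} [AddCommGroup g] [Module K g]

def Bk (b : g →ₗ[K] g →ₗ[K] g →ₗ[K] g) (N : Module.End K g)
    (i j l : ℕ) (x y z : g) : g := b ((N^i) x) ((N^j) y) ((N^l) z)

variable (b : g →ₗ[K] g →ₗ[K] g →ₗ[K] g) (N : Module.End K g)

lemma pow_app (n : ℕ) (x : g) : (N^(n+1)) x = N ((N^n) x) := by
  rw [pow_succ']; rfl

lemma mulapp (m : ℕ) (t : g) : (N^m) (N t) = (N^(m+1)) t := by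
  rw [pow_succ]; rfl

lemma mulapp2 (m n : ℕ) (t : g) : (N^m) ((N^n) t) = (N^(m+n)) t := by
  rw [pow_add]; rfl

lemma Bzero (h15 : ∀ x y z, b (N x) (N y) (N z) = 0) (i j l : ℕ) (x y z : g) :
    Bk b N (i+1) (j+1) (l+1) x y z = 0 := by
  unfold Bk; rw [pow_app, pow_app, pow_app]; exact h15 _ _ _

lemma star0 (h17 : ∀ x y z, N (deform N (fun u v w => b u v w) x y z)
      = b (N x) (N y) z + b (N x) y (N z) + b x (N y) (N z))
    (i j l : ℕ) (x y z : g) :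
    Bk b N (i+1) (j+1) l x y z + Bk b N (i+1) j (l+1) x y z + Bk b N i (j+1) (l+1) x y z
    = N (Bk b N (i+1) j l x y z) + N (Bk b N i (j+1) l x y z) + N (Bk b N i j (l+1) x y z)
      - N (N (Bk b N i j l x y z)) := by
  have h := h17 ((N^i) x) ((N^j) y) ((N^l) z)
  simp only [deform, map_add, map_sub, ← pow_app] at h
  unfold Bk
  linear_combination (norm := abel) -h

lemma star' (h17 : ∀ x y z, N (deform N (fun u v w => b u v w) x y z)
      = b (N x) (N y) z + b (N x) y (N z) + b x (N y) (N z))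
    (m i j l : ℕ) (x y z : g) :
    (N^m) (Bk b N (i+1) (j+1) l x y z) + (N^m) (Bk b N (i+1) j (l+1) x y z)
      + (N^m) (Bk b N i (j+1) (l+1) x y z)
    = (N^(m+1)) (Bk b N (i+1) j l x y z) + (N^(m+1)) (Bk b N i (j+1) l x y z)
      + (N^(m+1)) (Bk b N i j (l+1) x y z) - (N^(m+2)) (Bk b N i j l x y z) := by
  have h := congrArg (N^m) (star0 b N h17 i j l x y z)
  simp only [map_add, map_sub, mulapp] at h
  rw [show m+1+1 = m+2 from rfl] at h
  linear_combination (norm := abel) h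

end Aux

section Aux2
variable {K : Type*} [Field K] {g : Type*} [AddCommGroup g] [Module K g]
variable (b : g →ₗ[K] g →ₗ[K] g →ₗ[K] g) (N : Module.End K g)

lemma P1 (h17 : ∀ x y z, N (deform N (fun u v w => b u v w) x y z)
      = b (N x) (N y) z + b (N x) y (N z) + b x (N y) (N z))
    (h15 : ∀ x y z, b (N x) (N y) (N z) = 0) :
    ∀ (a : ℕ) (x y z : g),
    Bk b N (a+1) 1 0 x y z + Bk b N 1 (a+1) 0 x y z + Bk b N (a+1) 0 1 x y z
      + Bk b N 1 0 (a+1) x y z + Bk b N 0 (a+1) 1 x y z + Bk b N 0 1 (a+1) x y z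
    = (N^(a+1)) (Bk b N 1 0 0 x y z) + (N^(a+1)) (Bk b N 0 1 0 x y z)
      + (N^(a+1)) (Bk b N 0 0 1 x y z)
      + (N^1) (Bk b N (a+1) 0 0 x y z) + (N^1) (Bk b N 0 (a+1) 0 x y z)
      + (N^1) (Bk b N 0 0 (a+1) x y z)
      - (N^(a+2)) (Bk b N 0 0 0 x y z) - (N^(a+2)) (Bk b N 0 0 0 x y z) := by
  intro a
  induction a with
  | zero =>
    intro x y z
    have h := star' b N h17 0 0 0 0 x y z
    simp only [zero_add, pow_zero, Module.End.one_apply] at h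
    simp only [zero_add]
    linear_combination (norm := abel) h + h
  | succ a ih =>
    intro x y z
    have s1 := star' b N h17 0 (a+1) 0 0 x y z
    have s2 := star' b N h17 0 0 (a+1) 0 x y z
    have s3 := star' b N h17 0 0 0 (a+1) x y z
    simp only [zero_add, pow_zero, Module.End.one_apply] at s1 s2 s3
    have z1 := Bzero b N h15 a 0 0 x y z
    have z2 := Bzero b N h15 0 a 0 x y z
    have z3 := Bzero b N h15 0 0 a x y z
    have hA := congrArg (fun t : g => (N^1) t) (ih x y z)
    simp only [map_add, map_sub, mulapp2] at hA
    rw [show 1+(a+1) = a+2 from by omega, show (1:ℕ)+1 = 2 from rfl,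
      show 1+(a+2) = a+3 from by omega] at hA
    rw [show a+1+1 = a+2 from rfl, show a+1+2 = a+3 from rfl]
    linear_combination (norm := abel) s1 + s2 + s3 + hA - z1 - z2 - z3

lemma Pmain (h17 : ∀ x y z, N (deform N (fun u v w => b u v w) x y z)
      = b (N x) (N y) z + b (N x) y (N z) + b x (N y) (N z))
    (h15 : ∀ x y z, b (N x) (N y) (N z) = 0) :
    ∀ (r k : ℕ) (x y z : g),
    Bk b N (k+1) (r+1) 0 x y z + Bk b N (r+1) (k+1) 0 x y z
      + Bk b N (k+1) 0 (r+1) x y z + Bk b N (r+1) 0 (k+1) x y z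
      + Bk b N 0 (k+1) (r+1) x y z + Bk b N 0 (r+1) (k+1) x y z
    = (N^(k+1)) (Bk b N (r+1) 0 0 x y z) + (N^(k+1)) (Bk b N 0 (r+1) 0 x y z)
      + (N^(k+1)) (Bk b N 0 0 (r+1) x y z)
      + (N^(r+1)) (Bk b N (k+1) 0 0 x y z) + (N^(r+1)) (Bk b N 0 (k+1) 0 x y z)
      + (N^(r+1)) (Bk b N 0 0 (k+1) x y z)
      - (N^(k+r+2)) (Bk b N 0 0 0 x y z) - (N^(k+r+2)) (Bk b N 0 0 0 x y z) := by
  intro r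
  induction r with
  | zero =>
    intro k x y z
    have h := P1 b N h17 h15 k x y z
    simp only [Nat.add_zero, Nat.zero_add]
    linear_combination (norm := abel) h
  | succ r ih =>
    intro k
    induction k with
    | zero =>
      intro x y z
      have h := P1 b N h17 h15 (r+1) x y z
      simp only [Nat.add_zero, Nat.zero_add]
      linear_combination (norm := abel) h
    | succ k ihk =>
      intro x y z
      have s1 := star' b N h17 0 (k+1) (r+1) 0 x y z
      have s2 := star' b N h17 0 (r+1) (k+1) 0 x y z
      have s3 := star' b N h17 0 (k+1) 0 (r+1) x y z
      have s4 := star' b N h17 0 (r+1) 0 (k+1) x y z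
      have s5 := star' b N h17 0 0 (k+1) (r+1) x y z
      have s6 := star' b N h17 0 0 (r+1) (k+1) x y z
      simp only [zero_add, pow_zero, Module.End.one_apply] at s1 s2 s3 s4 s5 s6
      -- plain zero atoms (12)
      have z1 := Bzero b N h15 (k+1) r 0 x y z
      have z2 := Bzero b N h15 k (r+1) 0 x y z
      have z3 := Bzero b N h15 (r+1) k 0 x y z
      have z4 := Bzero b N h15 r (k+1) 0 x y z
      have z5 := Bzero b N h15 (k+1) 0 r x y z
      have z6 := Bzero b N h15 k 0 (r+1) x y z
      have z7 := Bzero b N h15 (r+1) 0 k x y z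
      have z8 := Bzero b N h15 r 0 (k+1) x y z
      have z9 := Bzero b N h15 0 (k+1) r x y z
      have z10 := Bzero b N h15 0 k (r+1) x y z
      have z11 := Bzero b N h15 0 (r+1) k x y z
      have z12 := Bzero b N h15 0 r (k+1) x y z
      -- N^1 zero atoms (6)
      have w1 : (N^1) (Bk b N (k+1) (r+1) 1 x y z) = 0 := by
        rw [Bzero b N h15 k r 0 x y z, map_zero]
      have w2 : (N^1) (Bk b N (r+1) (k+1) 1 x y z) = 0 := by
        rw [Bzero b N h15 r k 0 x y z, map_zero]
      have w3 : (N^1) (Bk b N (k+1) 1 (r+1) x y z) = 0 := by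
        rw [Bzero b N h15 k 0 r x y z, map_zero]
      have w4 : (N^1) (Bk b N (r+1) 1 (k+1) x y z) = 0 := by
        rw [Bzero b N h15 r 0 k x y z, map_zero]
      have w5 : (N^1) (Bk b N 1 (k+1) (r+1) x y z) = 0 := by
        rw [Bzero b N h15 0 k r x y z, map_zero]
      have w6 : (N^1) (Bk b N 1 (r+1) (k+1) x y z) = 0 := by
        rw [Bzero b N h15 0 r k x y z, map_zero]
      have hA := congrArg (fun t : g => (N^1) t) (ih (k+1) x y z)
      simp only [map_add, map_sub, mulapp2] at hA
      rw [show 1+(k+1+1) = k+3 from by omega, show 1+(r+1) = r+2 from by omega,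
        show 1+(k+1+r+2) = k+r+4 from by omega, show k+1+1 = k+2 from rfl] at hA
      have hB := congrArg (fun t : g => (N^1) t) (ihk x y z)
      simp only [map_add, map_sub, mulapp2] at hB
      rw [show 1+(k+1) = k+2 from by omega, show 1+(r+1+1) = r+3 from by omega,
        show 1+(k+(r+1)+2) = k+r+4 from by omega, show r+1+1 = r+2 from rfl] at hB
      have hC := congrArg (fun t : g => (N^2) t) (ih k x y z)
      simp only [map_add, map_sub, mulapp2] at hC
      rw [show 2+(k+1) = k+3 from by omega, show 2+(r+1) = r+3 from by omega,
        show 2+(k+r+2) = k+r+4 from by omega] at hC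
      rw [show k+1+1 = k+2 from rfl, show r+1+1 = r+2 from rfl,
        show k+1+(r+1)+2 = k+r+4 from by omega]
      linear_combination (norm := abel) s1 + s2 + s3 + s4 + s5 + s6 + hA + hB - hC
        - z1 - z2 - z3 - z4 - z5 - z6 - z7 - z8 - z9 - z10 - z11 - z12
        + w1 + w2 + w3 + w4 + w5 + w6

end Aux2

set_option maxHeartbeats 1000000 in
/-- Lemma 4.4: for a Nijenhuis operator `N` and `k, r ≥ 1`,
`[x₁,x₂,x₃]_{N^{k+r}} = ([x₁,x₂,x₃]_{N^k})_{N^r}`. -/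
theorem threeLie_nijenhuis_power_add
    {K : Type*} [Field K] {g : Type*} [AddCommGroup g] [Module K g]
    (b : g →ₗ[K] g →ₗ[K] g →ₗ[K] g)
    (hb1 : ∀ x y z, b x y z = - b y x z)
    (hb2 : ∀ x y z, b x y z = - b x z y)
    (hfi : ∀ x₁ x₂ y₁ y₂ y₃, b x₁ x₂ (b y₁ y₂ y₃)
      = b (b x₁ x₂ y₁) y₂ y₃ + b y₁ (b x₁ x₂ y₂) y₃ + b y₁ y₂ (b x₁ x₂ y₃))
    (N : Module.End K g) (hN : IsNijenhuis b N) :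
    ∀ (k r : ℕ), 1 ≤ k → 1 ≤ r → ∀ x₁ x₂ x₃ : g,
      deform (N ^ (k + r)) (fun u v w => b u v w) x₁ x₂ x₃
        = deform (N ^ r) (deform (N ^ k) (fun u v w => b u v w)) x₁ x₂ x₃ := by
  intro k r hk hr x y z
  obtain ⟨k', rfl⟩ : ∃ k', k = k' + 1 := ⟨k - 1, by omega⟩
  obtain ⟨r', rfl⟩ : ∃ r', r = r' + 1 := ⟨r - 1, by omega⟩
  have h := Pmain b N hN.1 hN.2 r' k' x y z
  simp only [Bk, pow_zero, Module.End.one_apply] at h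
  simp only [deform, map_add, map_sub, mulapp2]
  rw [show k'+1+(r'+1) = k'+r'+2 from by omega, show r'+1+(k'+1) = k'+r'+2 from by omega]
  linear_combination (norm := abel) -h
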